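/- Γ ⊢_{NF} E if and only if Γ ⊢_{HF} E; that is, the restricted Hilbert system for Corsi's logic F and the natural deduction system NF derive the same formulas from any set of assumptions Γ. -/

import Mathlib

/-- Formulas of subintuitionistic propositional logic. -/
inductive Fml : Type
  | atom : ℕ → Fml
  | bot  : Fml
  | and  : Fml → Fml → Fml
  | or   : Fml → Fml → Fml
  | imp  : Fml → Fml → Fml
deriving DecidableEq

/-- `A ↔ B` abbreviates `(A → B) ∧ (B → A)`. -/
def Fml.biimp (A B : Fml) : Fml := (A.imp B).and (B.imp A)

/-- The extra axiom schemes / rules among I, C, D, Ĉ, D̂, N, N₂. -/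
inductive ExtAx : Type
  | I | C | D | Chat | Dhat | N | N2
deriving DecidableEq

/-- Theorems of the Hilbert system WF extended with the schemes/rules in `E`
(derivations with no assumptions; all rules unrestricted here). -/
inductive HThm (E : Set ExtAx) : Fml → Prop
  | ax1 (A B : Fml)   : HThm E (A.imp (A.or B))
  | ax2 (A B : Fml)   : HThm E (B.imp (A.or B))
  | ax3 (A B : Fml)   : HThm E ((A.and B).imp A)
  | ax4 (A B : Fml)   : HThm E ((A.and B).imp B)
  | ax7 (A B C : Fml) : HThm E ((A.and (B.or C)).imp ((A.and B).or (A.and C)))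
  | ax8 (A : Fml)     : HThm E (A.imp A)
  | ax14 (A : Fml)    : HThm E (Fml.bot.imp A)
  | mp {A B : Fml}    : HThm E A → HThm E (A.imp B) → HThm E B
  | af {A : Fml} (B : Fml) : HThm E A → HThm E (B.imp A)
  | tr {A B C : Fml}  : HThm E (A.imp B) → HThm E (B.imp C) → HThm E (A.imp C)
  | rc {A B C : Fml}  : HThm E (A.imp B) → HThm E (A.imp C) → HThm E (A.imp (B.and C))
  | rd {A B C : Fml}  : HThm E (A.imp C) → HThm E (B.imp C) → HThm E ((A.or B).imp C)
  | conj {A B : Fml}  : HThm E A → HThm E B → HThm E (A.and B)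
  | re {A B C D : Fml} : HThm E (A.biimp B) → HThm E (C.biimp D) →
      HThm E ((A.imp C).biimp (B.imp D))
  | axI (A B C : Fml) : ExtAx.I ∈ E →
      HThm E (((A.imp B).and (B.imp C)).imp (A.imp C))
  | axC (A B C : Fml) : ExtAx.C ∈ E →
      HThm E (((A.imp B).and (A.imp C)).imp (A.imp (B.and C)))
  | axD (A B C : Fml) : ExtAx.D ∈ E →
      HThm E (((A.imp C).and (B.imp C)).imp ((A.or B).imp C))
  | axChat (A B C : Fml) : ExtAx.Chat ∈ E →
      HThm E ((A.imp (B.and C)).imp ((A.imp B).and (A.imp C)))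
  | axDhat (A B C : Fml) : ExtAx.Dhat ∈ E →
      HThm E (((A.or B).imp C).imp ((A.imp C).and (B.imp C)))
  | ruleN {A B C D : Fml} : ExtAx.N ∈ E →
      HThm E (A.imp (B.or C)) → HThm E (C.imp (A.or D)) →
      HThm E ((A.and D).imp B) → HThm E ((C.and B).imp D) →
      HThm E ((A.imp B).biimp (C.imp D))
  | ruleN2 {A B C D : Fml} : ExtAx.N2 ∈ E →
      HThm E (C.imp (A.or D)) → HThm E ((C.and B).imp D) →
      HThm E ((A.imp B).imp (C.imp D))

/-- Restricted derivability from assumptions in the Hilbert system WF + `E`: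
besides assumptions and theorems, only the conjunction rule is unrestricted, and
modus ponens may be used only when the major premise `A → B` is a theorem
(derived with no assumptions); all other rules are confined to theorems. -/
inductive HDer (E : Set ExtAx) (Γ : Set Fml) : Fml → Prop
  | hyp {A : Fml}  : A ∈ Γ → HDer E Γ A
  | thm {A : Fml}  : HThm E A → HDer E Γ A
  | conj {A B : Fml} : HDer E Γ A → HDer E Γ B → HDer E Γ (A.and B)
  | mp {A B : Fml} : HDer E Γ A → HThm E (A.imp B) → HDer E Γ B

/-- Tags for the optional implication-introduction rules of the natural
deduction systems. -/
inductive NRule : Type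
  | impI1 | impI2 | impN | impN2 | impChat | impDhat | impAnd | impOr | impTr
deriving DecidableEq

/-- Natural deduction derivations for the system with optional rules `R`.
`Deriv R Γ A` is a derivation of `A` all of whose open assumptions lie in `Γ`. -/
inductive Deriv (R : Set NRule) : Set Fml → Fml → Type
  | hyp (Γ : Set Fml) (A : Fml) : A ∈ Γ → Deriv R Γ A
  | andI {Γ : Set Fml} {A B : Fml} :
      Deriv R Γ A → Deriv R Γ B → Deriv R Γ (A.and B)
  | andE1 {Γ : Set Fml} {A B : Fml} :
      Deriv R Γ (A.and B) → Deriv R Γ A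
  | andE2 {Γ : Set Fml} {A B : Fml} :
      Deriv R Γ (A.and B) → Deriv R Γ B
  | orI1 {Γ : Set Fml} {A : Fml} (B : Fml) :
      Deriv R Γ A → Deriv R Γ (A.or B)
  | orI2 {Γ : Set Fml} (A : Fml) {B : Fml} :
      Deriv R Γ B → Deriv R Γ (A.or B)
  | orE {Γ : Set Fml} {A B C : Fml} :
      Deriv R Γ (A.or B) → Deriv R (insert A Γ) C → Deriv R (insert B Γ) C →
      Deriv R Γ C
  | botE {Γ : Set Fml} (A : Fml) :
      Deriv R Γ Fml.bot → Deriv R Γ A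
  | impI {Γ : Set Fml} {A B : Fml} :
      Deriv R {A} B → Deriv R Γ (A.imp B)
  | impE {Γ : Set Fml} {A B : Fml} :
      Deriv R Γ A → Deriv R (∅ : Set Fml) (A.imp B) → Deriv R Γ B
  | impI1 {Γ : Set Fml} {A B D : Fml} :
      NRule.impI1 ∈ R → Deriv R {B} D → Deriv R {D} B →
      Deriv R Γ ((A.imp B).imp (A.imp D))
  | impI2 {Γ : Set Fml} {A B D : Fml} :
      NRule.impI2 ∈ R → Deriv R {B} D → Deriv R {D} B →
      Deriv R Γ ((B.imp A).imp (D.imp A))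
  | impIN {Γ : Set Fml} {A B C D : Fml} :
      NRule.impN ∈ R →
      Deriv R {A} (C.or B) → Deriv R {D} B → Deriv R {C} (A.or D) → Deriv R {B} D →
      Deriv R Γ ((A.imp B).imp (C.imp D))
  | impIN2 {Γ : Set Fml} {A B C D : Fml} :
      NRule.impN2 ∈ R →
      Deriv R {C} (A.or D) → Deriv R {B} D →
      Deriv R Γ ((A.imp B).imp (C.imp D))
  | impIChat {Γ : Set Fml} {A B : Fml} (C : Fml) :
      NRule.impChat ∈ R → Deriv R {A} B →
      Deriv R Γ ((C.imp A).imp (C.imp B))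
  | impIDhat {Γ : Set Fml} {A B : Fml} (C : Fml) :
      NRule.impDhat ∈ R → Deriv R {A} B →
      Deriv R Γ ((B.imp C).imp (A.imp C))
  | impIAnd {Γ : Set Fml} {A B C : Fml} :
      NRule.impAnd ∈ R → Deriv R Γ (A.imp B) → Deriv R Γ (A.imp C) →
      Deriv R Γ (A.imp (B.and C))
  | impIOr {Γ : Set Fml} {A B C : Fml} :
      NRule.impOr ∈ R → Deriv R Γ (A.imp C) → Deriv R Γ (B.imp C) →
      Deriv R Γ ((A.or B).imp C)
  | impITr {Γ : Set Fml} {A B C : Fml} :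
      NRule.impTr ∈ R → Deriv R Γ (A.imp B) → Deriv R Γ (B.imp C) →
      Deriv R Γ (A.imp C)

/-- `Γ ⊢ A` in the natural deduction system with optional rules `R`. -/
def NDer (R : Set NRule) (Γ : Set Fml) (A : Fml) : Prop :=
  Nonempty (Deriv R Γ A)

/-- A derivation may serve as the major premise of an elimination rule in a
normal derivation: it is an assumption or ends with an elimination rule
different from ∨E (i.e. ∧E or →E). -/
def Deriv.MajorOK : ∀ {R : Set NRule} {Γ : Set Fml} {A : Fml}, Deriv R Γ A → Prop
  | _, _, _, .hyp _ _ _ => True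
  | _, _, _, .andE1 _   => True
  | _, _, _, .andE2 _   => True
  | _, _, _, .impE _ _  => True
  | _, _, _, _          => False

/-- A derivation is normal if every major premise of an elimination rule is
either an assumption or the conclusion of an elimination rule different
from ∨E. -/
def Deriv.Normal {R : Set NRule} : ∀ {Γ : Set Fml} {A : Fml}, Deriv R Γ A → Prop
  | _, _, .hyp _ _ _ => True
  | _, _, .andI d e => d.Normal ∧ e.Normal
  | _, _, .andE1 d => d.MajorOK ∧ d.Normal
  | _, _, .andE2 d => d.MajorOK ∧ d.Normal
  | _, _, .orI1 _ d => d.Normal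
  | _, _, .orI2 _ d => d.Normal
  | _, _, .orE d e f => d.MajorOK ∧ d.Normal ∧ e.Normal ∧ f.Normal
  | _, _, .botE _ d => d.Normal
  | _, _, .impI d => d.Normal
  | _, _, .impE d e => e.MajorOK ∧ d.Normal ∧ e.Normal
  | _, _, .impI1 _ d e => d.Normal ∧ e.Normal
  | _, _, .impI2 _ d e => d.Normal ∧ e.Normal
  | _, _, .impIN _ d e f g => d.Normal ∧ e.Normal ∧ f.Normal ∧ g.Normal
  | _, _, .impIN2 _ d e => d.Normal ∧ e.Normal
  | _, _, .impIChat _ _ d => d.Normal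
  | _, _, .impIDhat _ _ d => d.Normal
  | _, _, .impIAnd _ d e => d.Normal ∧ e.Normal
  | _, _, .impIOr _ d e => d.Normal ∧ e.Normal
  | _, _, .impITr _ d e => d.Normal ∧ e.Normal

/-! An extra assumption `A` of a restricted Hilbert derivation can be discharged: `A, Γ ⊢_{HF} C`
yields a `G` with `Γ ⊢_{HF} G` and `⊢ A ∧ G → C`. This makes →I of NF admissible in HF, and ∨E too,
through the distributivity axiom; the other NF rules are MP with a theorem or instances of I, C, D.
Conversely, the Hilbert rules Tr, RC, RD are exactly →_tr I, →_∧ I, →_∨ I, and RE is two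
applications of →_tr I under →I. -/

namespace HThm

variable {E : Set ExtAx} {A B C D : Fml}

theorem and_imp_and (h₁ : HThm E (A.imp C)) (h₂ : HThm E (B.imp D)) :
    HThm E ((A.and B).imp (C.and D)) :=
  rc (tr (ax3 _ _) h₁) (tr (ax4 _ _) h₂)

theorem and_comm_imp : HThm E ((A.and B).imp (B.and A)) :=
  rc (ax4 _ _) (ax3 _ _)

end HThm

namespace HDer

variable {E : Set ExtAx} {Γ : Set Fml} {A B C : Fml}

theorem hThm_of_empty (h : HDer E ∅ A) : HThm E A := by
  induction h with
  | hyp h => exact absurd h (Set.notMem_empty _)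
  | thm h => exact h
  | conj _ _ ih₁ ih₂ => exact .conj ih₁ ih₂
  | mp _ hT ih => exact .mp ih hT

theorem exists_imp_of_insert (h : HDer E (insert A Γ) C) :
    ∃ G, HDer E Γ G ∧ HThm E ((A.and G).imp C) := by
  induction h with
  | @hyp C hC =>
    rcases hC with rfl | hC
    · exact ⟨_, .thm (.ax8 Fml.bot), .ax3 _ _⟩
    · exact ⟨C, .hyp hC, .ax4 _ _⟩
  | @thm C hC => exact ⟨C, .thm hC, .ax4 _ _⟩
  | conj _ _ ih₁ ih₂ =>
    obtain ⟨G₁, hG₁, hT₁⟩ := ih₁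
    obtain ⟨G₂, hG₂, hT₂⟩ := ih₂
    exact ⟨G₁.and G₂, hG₁.conj hG₂,
      .rc (.tr (.and_imp_and (.ax8 _) (.ax3 _ _)) hT₁)
        (.tr (.and_imp_and (.ax8 _) (.ax4 _ _)) hT₂)⟩
  | mp _ hT ih =>
    obtain ⟨G, hG, hT'⟩ := ih
    exact ⟨G, hG, .tr hT' hT⟩

theorem hThm_imp_of_singleton (h : HDer E {A} B) : HThm E (A.imp B) := by
  rw [← LawfulSingleton.insert_empty_eq] at h
  obtain ⟨G, hG, hT⟩ := exists_imp_of_insert h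
  exact .tr (.rc (.ax8 _) (.af _ (hThm_of_empty hG))) hT

theorem orE (h : HDer E Γ (A.or B)) (h₁ : HDer E (insert A Γ) C)
    (h₂ : HDer E (insert B Γ) C) : HDer E Γ C := by
  obtain ⟨G₁, hG₁, hT₁⟩ := exists_imp_of_insert h₁
  obtain ⟨G₂, hG₂, hT₂⟩ := exists_imp_of_insert h₂
  -- `(G₁ ∧ G₂) ∧ (A ∨ B)` is derivable from `Γ`; distributing it over `∨` reduces to `hT₁, hT₂`.
  refine (hG₁.conj hG₂ |>.conj h).mp (.tr (.ax7 _ _ _) (.rd ?_ ?_))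
  · exact .tr (.tr .and_comm_imp (.and_imp_and (.ax8 _) (.ax3 _ _))) hT₁
  · exact .tr (.tr .and_comm_imp (.and_imp_and (.ax8 _) (.ax4 _ _))) hT₂

end HDer

def Deriv.weaken {R : Set NRule} : ∀ {Γ Δ : Set Fml} {A : Fml},
    Γ ⊆ Δ → Deriv R Γ A → Deriv R Δ A
  | _, _, _, h, .hyp _ _ hA => .hyp _ _ (h hA)
  | _, _, _, h, .andI d e => .andI (d.weaken h) (e.weaken h)
  | _, _, _, h, .andE1 d => .andE1 (d.weaken h)
  | _, _, _, h, .andE2 d => .andE2 (d.weaken h)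
  | _, _, _, h, .orI1 B d => .orI1 B (d.weaken h)
  | _, _, _, h, .orI2 A d => .orI2 A (d.weaken h)
  | _, _, _, h, .orE d e f =>
      .orE (d.weaken h) (e.weaken (Set.insert_subset_insert h))
        (f.weaken (Set.insert_subset_insert h))
  | _, _, _, h, .botE A d => .botE A (d.weaken h)
  | _, _, _, _, .impI d => .impI d
  | _, _, _, h, .impE d e => .impE (d.weaken h) e
  | _, _, _, _, .impI1 hm d e => .impI1 hm d e
  | _, _, _, _, .impI2 hm d e => .impI2 hm d e
  | _, _, _, _, .impIN hm a b c d => .impIN hm a b c d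
  | _, _, _, _, .impIN2 hm a b => .impIN2 hm a b
  | _, _, _, _, .impIChat C hm d => .impIChat C hm d
  | _, _, _, _, .impIDhat C hm d => .impIDhat C hm d
  | _, _, _, h, .impIAnd hm d e => .impIAnd hm (d.weaken h) (e.weaken h)
  | _, _, _, h, .impIOr hm d e => .impIOr hm (d.weaken h) (e.weaken h)
  | _, _, _, h, .impITr hm d e => .impITr hm (d.weaken h) (e.weaken h)

section Translations

variable {E : Set ExtAx} {R : Set NRule} {Γ : Set Fml} {A : Fml}

theorem NDer.of_hThm (hE : E ⊆ {ExtAx.I, ExtAx.C, ExtAx.D}) (hTr : NRule.impTr ∈ R)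
    (hAnd : NRule.impAnd ∈ R) (hOr : NRule.impOr ∈ R) (h : HThm E A) : NDer R ∅ A := by
  have notMem {X : ExtAx} (hX : X ∈ E) (hne : X ∉ ({ExtAx.I, ExtAx.C, ExtAx.D} : Set ExtAx)) :
      False := hne (hE hX)
  induction h with
  | ax1 A B => exact ⟨.impI (.orI1 B (.hyp _ _ rfl))⟩
  | ax2 A B => exact ⟨.impI (.orI2 A (.hyp _ _ rfl))⟩
  | ax3 A B => exact ⟨.impI (.andE1 (.hyp _ _ rfl))⟩
  | ax4 A B => exact ⟨.impI (.andE2 (.hyp _ _ rfl))⟩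
  | ax7 A B C =>
    have hA {X : Fml} : Deriv R (insert X {A.and (B.or C)}) A :=
      .andE1 (.hyp _ _ (Set.mem_insert_of_mem _ rfl))
    exact ⟨.impI (.orE (.andE2 (.hyp _ _ rfl))
      (.orI1 _ (.andI hA (.hyp _ _ (Set.mem_insert _ _))))
      (.orI2 _ (.andI hA (.hyp _ _ (Set.mem_insert _ _)))))⟩
  | ax8 A => exact ⟨.impI (.hyp _ _ rfl)⟩
  | ax14 A => exact ⟨.impI (.botE _ (.hyp _ _ rfl))⟩
  | mp _ _ ih₁ ih₂ => exact ih₁.map2 .impE ih₂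
  | af B _ ih => exact ih.map fun d => .impI (d.weaken (Set.empty_subset _))
  | tr _ _ ih₁ ih₂ => exact ih₁.map2 (.impITr hTr) ih₂
  | rc _ _ ih₁ ih₂ => exact ih₁.map2 (.impIAnd hAnd) ih₂
  | rd _ _ ih₁ ih₂ => exact ih₁.map2 (.impIOr hOr) ih₂
  | conj _ _ ih₁ ih₂ => exact ih₁.map2 .andI ih₂
  | re _ _ ih₁ ih₂ =>
    obtain ⟨d₁⟩ := ih₁
    obtain ⟨d₂⟩ := ih₂
    have w {X : Fml} (d : Deriv R ∅ X) {Y : Fml} : Deriv R {Y} X := d.weaken (Set.empty_subset _)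
    exact ⟨.andI
      (.impI (.impITr hTr (.impITr hTr (w d₁.andE2) (.hyp _ _ rfl)) (w d₂.andE1)))
      (.impI (.impITr hTr (.impITr hTr (w d₁.andE1) (.hyp _ _ rfl)) (w d₂.andE2)))⟩
  | axI => exact ⟨.impI (.impITr hTr (.andE1 (.hyp _ _ rfl)) (.andE2 (.hyp _ _ rfl)))⟩
  | axC => exact ⟨.impI (.impIAnd hAnd (.andE1 (.hyp _ _ rfl)) (.andE2 (.hyp _ _ rfl)))⟩
  | axD => exact ⟨.impI (.impIOr hOr (.andE1 (.hyp _ _ rfl)) (.andE2 (.hyp _ _ rfl)))⟩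
  | axChat _ _ _ h => exact (notMem h (by simp)).elim
  | axDhat _ _ _ h => exact (notMem h (by simp)).elim
  | ruleN h => exact (notMem h (by simp)).elim
  | ruleN2 h => exact (notMem h (by simp)).elim

theorem NDer.of_hDer (hE : E ⊆ {ExtAx.I, ExtAx.C, ExtAx.D}) (hTr : NRule.impTr ∈ R)
    (hAnd : NRule.impAnd ∈ R) (hOr : NRule.impOr ∈ R) (h : HDer E Γ A) : NDer R Γ A := by
  have ofHThm {X : Fml} (hX : HThm E X) : NDer R ∅ X := of_hThm hE hTr hAnd hOr hX
  induction h with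
  | hyp h => exact ⟨.hyp _ _ h⟩
  | thm h => exact (ofHThm h).map (·.weaken (Set.empty_subset _))
  | conj _ _ ih₁ ih₂ => exact ih₁.map2 .andI ih₂
  | mp _ hT ih => exact ih.map2 .impE (ofHThm hT)

theorem HDer.of_deriv (hR : R ⊆ {NRule.impTr, NRule.impAnd, NRule.impOr}) (hI : ExtAx.I ∈ E)
    (hC : ExtAx.C ∈ E) (hD : ExtAx.D ∈ E) (d : Deriv R Γ A) : HDer E Γ A := by
  have notMem {X : NRule} (hX : X ∈ R)
      (hne : X ∉ ({NRule.impTr, NRule.impAnd, NRule.impOr} : Set NRule)) : False := hne (hR hX)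
  induction d with
  | hyp _ _ h => exact .hyp h
  | andI _ _ ih₁ ih₂ => exact ih₁.conj ih₂
  | andE1 _ ih => exact ih.mp (.ax3 _ _)
  | andE2 _ ih => exact ih.mp (.ax4 _ _)
  | orI1 _ _ ih => exact ih.mp (.ax1 _ _)
  | orI2 _ _ ih => exact ih.mp (.ax2 _ _)
  | orE _ _ _ ih ih₁ ih₂ => exact ih.orE ih₁ ih₂
  | botE _ _ ih => exact ih.mp (.ax14 _)
  | impI _ ih => exact .thm ih.hThm_imp_of_singleton
  | impE _ _ ih₁ ih₂ => exact ih₁.mp ih₂.hThm_of_empty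
  | impI1 h => exact (notMem h (by simp)).elim
  | impI2 h => exact (notMem h (by simp)).elim
  | impIN h => exact (notMem h (by simp)).elim
  | impIN2 h => exact (notMem h (by simp)).elim
  | impIChat _ h => exact (notMem h (by simp)).elim
  | impIDhat _ h => exact (notMem h (by simp)).elim
  | impIAnd _ _ _ ih₁ ih₂ => exact (ih₁.conj ih₂).mp (.axC _ _ _ hC)
  | impIOr _ _ _ ih₁ ih₂ => exact (ih₁.conj ih₂).mp (.axD _ _ _ hD)
  | impITr _ _ _ ih₁ ih₂ => exact (ih₁.conj ih₂).mp (.axI _ _ _ hI)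

end Translations

theorem hilbert_iff_natded_F (Γ : Set Fml) (A : Fml) :
    HDer ({ExtAx.I, ExtAx.C, ExtAx.D} : Set ExtAx) Γ A ↔ NDer {NRule.impTr, NRule.impAnd, NRule.impOr} Γ A :=
  ⟨NDer.of_hDer subset_rfl (by simp) (by simp) (by simp),
    fun ⟨d⟩ => HDer.of_deriv subset_rfl (by simp) (by simp) (by simp) d⟩
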